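/- Let α > 1, β > 0, and let s > 0 be a real number. Then ∫₀^∞ e^{−st} · (∑_{k=0}^∞ (− k · ψ(αk+β) / Γ(αk+β)) · t^k) dt = − ∑_{k=0}^∞ (k! · k · ψ(αk+β) / Γ(αk+β)) · s^{−k−1}. (The integrand series is the term-by-term derivative with respect to α of the Mittag-Leffler function E_{α,β}(t), and both the integral and the right-hand series converge since α > 1.) -/

import Mathlib

/-!
Integrating term by term against `exp (-(s * t))` turns `tᵏ` into `k! / s^(k+1)`; this is
legitimate once `∑ k |ψ(αk+β)| k! / (Γ(αk+β) s^(k+1))` converges. Log-convexity of `Γ` gives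
`Γ(x + α) ≥ Γ(x) (x - 1)^α` and `log (x - 1) ≤ ψ(x) ≤ log x`, so `|ψ(αk+β)| = O(k)` and the
ratio of consecutive terms of `k! rᵏ / Γ(αk+β)` is `O(k / k^α) → 0` because `α > 1`.
-/
open Real MeasureTheory

/-- The digamma function `ψ(x) = the logarithmic derivative of Γ`, i.e. the derivative of `log ∘ Γ`. -/
noncomputable def digamma (x : ℝ) : ℝ := deriv (fun y : ℝ => Real.log (Real.Gamma y)) x

open Set Filter Topology
open scoped Nat

namespace Real

lemma differentiableAt_log_Gamma {x : ℝ} (hx : 0 < x) :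
    DifferentiableAt ℝ (log ∘ Gamma) x :=
  (differentiableAt_Gamma fun m => by linarith [(m.cast_nonneg : (0 : ℝ) ≤ m)]).log
    (Gamma_pos_of_pos hx).ne'

lemma log_Gamma_add_one {x : ℝ} (hx : 0 < x) :
    log (Gamma (x + 1)) = log (Gamma x) + log x := by
  rw [Gamma_add_one hx.ne', log_mul hx.ne' (Gamma_pos_of_pos hx).ne', add_comm]

lemma log_Gamma_sub_log_Gamma_sub_one {x : ℝ} (hx : 1 < x) :
    log (Gamma x) - log (Gamma (x - 1)) = log (x - 1) := by
  have h := log_Gamma_add_one (by linarith : 0 < x - 1)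
  rw [sub_add_cancel] at h
  linarith

lemma Gamma_mul_rpow_le_Gamma_add {x a : ℝ} (hx : 1 < x) (ha : 0 < a) :
    Gamma x * (x - 1) ^ a ≤ Gamma (x + a) := by
  have hx₁ : 0 < x - 1 := by linarith
  have hslope := convexOn_log_Gamma.slope_mono_adjacent (x := x - 1) (y := x) (z := x + a)
    hx₁ (by simp only [mem_Ioi]; linarith) (by linarith) (by linarith)
  simp only [Function.comp_apply, sub_sub_cancel, div_one, add_sub_cancel_left,
    log_Gamma_sub_log_Gamma_sub_one hx] at hslope
  calc Gamma x * (x - 1) ^ a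
      = exp (log (Gamma x) + a * log (x - 1)) := by
        rw [exp_add, exp_log (Gamma_pos_of_pos (by linarith)), rpow_def_of_pos hx₁, mul_comm a]
    _ ≤ exp (log (Gamma (x + a))) := by
        gcongr
        rw [le_div_iff₀ ha] at hslope
        linarith
    _ = Gamma (x + a) := exp_log (Gamma_pos_of_pos (by linarith))

end Real

lemma digamma_le_log {x : ℝ} (hx : 0 < x) : digamma x ≤ log x := by
  have h := convexOn_log_Gamma.deriv_le_slope (x := x) (y := x + 1) hx
    (by simp only [mem_Ioi]; linarith) (lt_add_one x) (differentiableAt_log_Gamma hx)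
  rwa [slope_def_field, Function.comp_apply, Function.comp_apply, log_Gamma_add_one hx,
    add_sub_cancel_left, add_sub_cancel_left, div_one] at h

lemma log_sub_one_le_digamma {x : ℝ} (hx : 1 < x) : log (x - 1) ≤ digamma x := by
  have h := convexOn_log_Gamma.slope_le_deriv (x := x - 1) (y := x)
    (by simp only [mem_Ioi]; linarith) (by simp only [mem_Ioi]; linarith) (by linarith)
    (differentiableAt_log_Gamma (by linarith))
  rwa [slope_def_field, Function.comp_apply, Function.comp_apply,
    log_Gamma_sub_log_Gamma_sub_one hx, sub_sub_cancel, div_one] at h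

lemma abs_digamma_le_self {x : ℝ} (hx : 2 ≤ x) : |digamma x| ≤ x := by
  have hψ := (log_nonneg (by linarith)).trans (log_sub_one_le_digamma (by linarith))
  rw [abs_of_nonneg hψ]
  exact (digamma_le_log (by linarith)).trans
    ((log_le_sub_one_of_pos (by linarith)).trans (by linarith))

lemma tendsto_mul_natCast_add_atTop {a : ℝ} (ha : 0 < a) (b : ℝ) :
    Tendsto (fun k : ℕ => a * k + b) atTop atTop :=
  tendsto_atTop_add_const_right _ b (tendsto_natCast_atTop_atTop.const_mul_atTop ha)

lemma summable_factorial_mul_pow_div_Gamma {α : ℝ} (hα : 1 < α) (β r : ℝ) :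
    Summable fun k : ℕ => k ! * r ^ k / Gamma (α * k + β) := by
  have hy := tendsto_mul_natCast_add_atTop (by linarith : 0 < α) (β - 1)
  have hsmall : ∀ᶠ k : ℕ in atTop, |r| * (α * k + (β - 1)) ^ (-(α - 1)) ≤ 1 / 2 := by
    have h := ((tendsto_rpow_neg_atTop (by linarith : 0 < α - 1)).comp hy).const_mul |r|
    rw [mul_zero] at h
    exact h.eventually_le_const one_half_pos
  refine summable_of_ratio_norm_eventually_le one_half_lt_one ?_
  filter_upwards [hy.eventually_gt_atTop 0,
    (tendsto_mul_natCast_add_atTop (by linarith : 0 < α - 1) (β - 2)).eventually_ge_atTop 0,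
    hsmall] with k hy₀ hk hsm
  set y := α * k + (β - 1)
  have hΓ := Gamma_mul_rpow_le_Gamma_add (x := α * k + β) (by linarith) (by linarith : 0 < α)
  rw [show α * k + β - 1 = y by ring] at hΓ
  have hsplit : y ^ α = y * y ^ (α - 1) := by
    rw [← rpow_one_add' hy₀.le (by linarith), add_sub_cancel]
  rw [rpow_neg hy₀.le] at hsm
  have hΓ₀ := Gamma_pos_of_pos (by linarith : 0 < α * k + β)
  have hΓ₁ : 0 < Gamma (α * k + β + α) := Gamma_pos_of_pos (by linarith)
  rw [show α * ((k + 1 : ℕ) : ℝ) + β = α * k + β + α by push_cast; ring]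
  simp only [norm_div, norm_mul, norm_pow, Real.norm_eq_abs, Nat.abs_cast, abs_of_pos hΓ₀,
    abs_of_pos hΓ₁, Nat.factorial_succ, Nat.cast_mul, pow_succ]
  set F := (k ! : ℝ) * |r| ^ k / Gamma (α * k + β)
  have hky : ((k + 1 : ℕ) : ℝ) / y ≤ 1 := by
    rw [div_le_one hy₀]; push_cast; linarith
  calc ((k + 1 : ℕ) : ℝ) * k ! * (|r| ^ k * |r|) / Gamma (α * k + β + α)
      ≤ ((k + 1 : ℕ) : ℝ) * k ! * (|r| ^ k * |r|) / (Gamma (α * k + β) * y ^ α) := by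
        gcongr
    _ = F * (((k + 1 : ℕ) : ℝ) / y) * (|r| * (y ^ (α - 1))⁻¹) := by
        rw [hsplit]
        simp only [F]
        field_simp
    _ ≤ F * 1 * (1 / 2) := by gcongr
    _ = 1 / 2 * F := by ring

lemma summable_mul_digamma_mul_factorial_mul_pow_div_Gamma {α : ℝ} (hα : 1 < α) (β r : ℝ) :
    Summable fun k : ℕ => k * digamma (α * k + β) * (k ! * r ^ k / Gamma (α * k + β)) := by
  have hx := tendsto_mul_natCast_add_atTop (by linarith : 0 < α) β
  refine .of_norm_bounded_eventually_nat
    ((summable_factorial_mul_pow_div_Gamma hα β (4 * |r|)).abs.mul_left (α + 1)) ?_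
  filter_upwards [hx.eventually_ge_atTop 2, tendsto_natCast_atTop_atTop.eventually_ge_atTop β]
    with k hx₂ hβ
  have hΓ := Gamma_pos_of_pos (by linarith : 0 < α * k + β)
  have hpow : (k : ℝ) ^ 2 ≤ 4 ^ k :=
    calc (k : ℝ) ^ 2 ≤ (2 ^ k) ^ 2 := by gcongr; exact_mod_cast k.lt_two_pow_self.le
      _ = 4 ^ k := by rw [← pow_mul, mul_comm, pow_mul]; norm_num
  have hcoeff : k * |digamma (α * k + β)| ≤ (α + 1) * 4 ^ k :=
    calc k * |digamma (α * k + β)| ≤ k * ((α + 1) * k) := by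
          gcongr; exact (abs_digamma_le_self hx₂).trans (by linarith)
      _ = (α + 1) * k ^ 2 := by ring
      _ ≤ (α + 1) * 4 ^ k := by gcongr
  have hF : (0 : ℝ) ≤ k ! * (4 * |r|) ^ k / Gamma (α * k + β) := by positivity
  rw [Real.norm_eq_abs, abs_mul, abs_mul, abs_div, abs_mul, abs_pow, Nat.abs_cast, Nat.abs_cast,
    abs_of_pos hΓ, abs_of_nonneg hF, mul_pow]
  calc k * |digamma (α * k + β)| * (k ! * |r| ^ k / Gamma (α * k + β))
      ≤ (α + 1) * 4 ^ k * (k ! * |r| ^ k / Gamma (α * k + β)) := by gcongr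
    _ = (α + 1) * (k ! * (4 ^ k * |r| ^ k) / Gamma (α * k + β)) := by ring

lemma integral_pow_mul_exp_neg_mul {s : ℝ} (hs : 0 < s) (k : ℕ) :
    ∫ t in Ioi 0, t ^ k * exp (-(s * t)) = k ! / s ^ (k + 1) := by
  have h := integral_rpow_mul_exp_neg_mul_Ioi (by positivity : (0 : ℝ) < k + 1) hs
  rw [add_sub_cancel_right, Gamma_nat_eq_factorial, ← Nat.cast_add_one] at h
  simpa only [rpow_natCast, one_div, inv_pow, inv_mul_eq_div] using h

lemma integrableOn_pow_mul_exp_neg_mul {s : ℝ} (hs : 0 < s) (k : ℕ) :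
    IntegrableOn (fun t => t ^ k * exp (-(s * t))) (Ioi 0) :=
  .of_integral_ne_zero (by rw [integral_pow_mul_exp_neg_mul hs]; positivity)

theorem integral_exp_neg_mul_tsum_mul_pow {s : ℝ} (hs : 0 < s) {c : ℕ → ℝ}
    (hc : Summable fun k => |c k| * (k ! / s ^ (k + 1))) :
    ∫ t in Ioi 0, exp (-(s * t)) * ∑' k, c k * t ^ k = ∑' k, c k * (k ! / s ^ (k + 1)) := by
  have hnorm (k : ℕ) :
      ∫ t in Ioi 0, ‖c k * (t ^ k * exp (-(s * t)))‖ = |c k| * (k ! / s ^ (k + 1)) := by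
    rw [← integral_pow_mul_exp_neg_mul hs k, ← integral_const_mul]
    refine setIntegral_congr_fun measurableSet_Ioi fun t ht => ?_
    rw [norm_mul, norm_mul, norm_pow, Real.norm_eq_abs, Real.norm_eq_abs, Real.norm_eq_abs,
      abs_of_pos (mem_Ioi.mp ht), abs_of_pos (exp_pos _)]
  calc ∫ t in Ioi 0, exp (-(s * t)) * ∑' k, c k * t ^ k
      = ∫ t in Ioi 0, ∑' k, c k * (t ^ k * exp (-(s * t))) := by
        congr 1 with t
        rw [mul_comm, ← tsum_mul_right]
        simp only [mul_assoc]
    _ = ∑' k, ∫ t in Ioi 0, c k * (t ^ k * exp (-(s * t))) :=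
        (integral_tsum_of_summable_integral_norm
          (fun k => (integrableOn_pow_mul_exp_neg_mul hs k).const_mul (c k))
          (by simpa only [hnorm] using hc)).symm
    _ = ∑' k, c k * (k ! / s ^ (k + 1)) := by
        simp only [integral_const_mul, integral_pow_mul_exp_neg_mul hs]

theorem laplace_deriv_alpha_ML_pure_general (α β s : ℝ) (hα : 1 < α) (hs : 0 < s) :
    (∫ t in Set.Ioi (0 : ℝ), Real.exp (-(s * t)) *
        ∑' k : ℕ, (-((k : ℝ) * digamma (α * k + β) / Real.Gamma (α * k + β))) * t ^ k)
      = -∑' k : ℕ, ((k.factorial : ℝ) * k * digamma (α * k + β) / Real.Gamma (α * k + β)) *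
          s ^ (-(k : ℝ) - 1) := by
  set c : ℕ → ℝ := fun k => -((k : ℝ) * digamma (α * k + β) / Gamma (α * k + β))
  have hc (k : ℕ) : c k * (k ! / s ^ (k + 1)) =
      -s⁻¹ * (k * digamma (α * k + β) * (k ! * s⁻¹ ^ k / Gamma (α * k + β))) := by
    simp only [c, pow_succ, inv_pow]
    field_simp
  have hsum : Summable fun k => |c k| * (k ! / s ^ (k + 1)) := by
    refine ((summable_mul_digamma_mul_factorial_mul_pow_div_Gamma hα β s⁻¹).mul_left
      (-s⁻¹)).abs.congr fun k => ?_
    rw [← hc, abs_mul, abs_of_nonneg (by positivity : (0 : ℝ) ≤ k ! / s ^ (k + 1))]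
  refine (integral_exp_neg_mul_tsum_mul_pow hs hsum).trans ?_
  rw [← tsum_neg]
  refine tsum_congr fun k => ?_
  rw [show -(k : ℝ) - 1 = -((k + 1 : ℕ) : ℝ) by push_cast; ring, rpow_neg hs.le, rpow_natCast]
  simp only [c]
  ring

theorem laplace_deriv_alpha_ML_pure (α β s : ℝ) (hα : 1 < α) (hβ : 0 < β) (hs : 0 < s) :
    (∫ t in Set.Ioi (0 : ℝ), Real.exp (-(s * t)) *
        ∑' k : ℕ, (-((k : ℝ) * digamma (α * k + β) / Real.Gamma (α * k + β))) * t ^ k)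
      = -∑' k : ℕ, ((k.factorial : ℝ) * k * digamma (α * k + β) / Real.Gamma (α * k + β)) *
          s ^ (-(k : ℝ) - 1) :=
  laplace_deriv_alpha_ML_pure_general α β s hα hs
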